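/- The derived truth table of φ ⇒ ψ := (φ → ψ) ∧ (¬ψ → ¬φ) in K3+cmi coincides exactly with the Łukasiewicz 3-valued conditional: it gives N when (φ,ψ) is (T,N) or (N,F), F when (φ,ψ) is (T,F), and T otherwise. -/
import Mathlib


/-- Truth values of K3: T (designated), N, F. -/
inductive K3 : Type | T | N | F
deriving DecidableEq

namespace K3

/-- Negation: swaps T and F, fixes N. -/
def neg : K3 → K3 | T => F | F => T | N => N

/-- Conjunction: meet w.r.t. F < N < T. -/
def and : K3 → K3 → K3
  | T, y => y | x, T => x
  | F, _ => F | _, F => F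
  | N, N => N

/-- The cmi conditional restricted to K3: the consequent's value if the
antecedent is T, and T if the antecedent is N or F. -/
def cmi : K3 → K3 → K3
  | T, y => y
  | N, _ => T | F, _ => T

/-- The contraposed conditional ⇒: (x → y) ∧ (¬y → ¬x). -/
def darr (x y : K3) : K3 := K3.and (cmi x y) (cmi (neg y) (neg x))

/-- Designated value of K3: only T. -/
def designated (x : K3) : Prop := x = T

end K3

/-- The Łukasiewicz 3-valued conditional, by its standard table. -/
def K3.luk : K3 → K3 → K3
  | K3.T, K3.N => K3.N
  | K3.T, K3.F => K3.F
  | K3.N, K3.F => K3.N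
  | _, _ => K3.T

/-- In K3+cmi, the contraposed conditional ⇒ coincides with the Ł3 conditional. -/
theorem k3_darr_eq_luk (x y : K3) : K3.darr x y = K3.luk x y := by cases x <;> cases y <;> rfl
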